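/- For any two positive numbers r₁ > 0 and r₂ > 0 and any ω > 0, the classes of pseudo S-asymptotically ω-periodic functions of class r₁ and of class r₂ coincide: PSAP_{ω,r₁}(X) = PSAP_{ω,r₂}(X). -/

import Mathlib

/-!
Every window `[s - r₂, s]` is covered by the `n = ⌊r₂ / r₁⌋₊ + 1` windows
`[s - (k + 1) r₁, s - k r₁]`, `k < n`, so the `r₂`-window supremum of the defect
`‖u (τ + ω) - u τ‖` is at most the sum of `n` shifted `r₁`-window suprema. After the shift,
each of their integrals over `[r₂, T]` is at most the integral of the `r₁`-window supremum over
`[r₁, T]` plus `M r₁`, where `M` bounds the defect. Hence the `r₂`-average is at most `n` times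
the `r₁`-average plus `O(1 / T)`, and the argument is symmetric in `r₁, r₂`.
-/

open MeasureTheory Filter Set

/-- `u ∈ PSAP_{ω,r}(X)`: pseudo S-asymptotically ω-periodic of class r. -/
def PSAPclass {X : Type*} [NormedAddCommGroup X] (ω r : ℝ) (u : ℝ → X) : Prop :=
  Tendsto (fun T : ℝ => (1 / T) * ∫ s in r..T, ⨆ τ ∈ Set.Icc (s - r) s, ‖u (τ + ω) - u τ‖)
    atTop (nhds 0)

theorem intervalIntegral.integral_le_mul_add_integral {f : ℝ → ℝ} (hf : Continuous f)
    (hf0 : ∀ x, 0 ≤ f x) {M : ℝ} (hfM : ∀ x, f x ≤ M) {a b r T : ℝ} (ha : 0 ≤ a) (hab : a ≤ b)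
    (hbT : b ≤ T) (hr : 0 ≤ r) :
    ∫ x in a..b, f x ≤ M * r + ∫ x in r..T, f x := by
  have hsplit := intervalIntegral.integral_add_adjacent_intervals
    (hf.intervalIntegrable (μ := volume) 0 r) (hf.intervalIntegrable r T)
  have hinit : ∫ x in (0 : ℝ)..r, f x ≤ M * r := by
    simpa [mul_comm] using intervalIntegral.integral_mono_on hr
      (hf.intervalIntegrable (μ := volume) 0 r) intervalIntegrable_const fun x _ => hfM x
  calc ∫ x in a..b, f x ≤ ∫ x in (0 : ℝ)..T, f x :=
        intervalIntegral.integral_mono_interval (μ := volume) ha hab hbT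
          (Eventually.of_forall hf0) (hf.intervalIntegrable 0 T)
    _ ≤ M * r + ∫ x in r..T, f x := by linarith

noncomputable section

def windowSup (g : ℝ → ℝ) (r s : ℝ) : ℝ :=
  ⨆ τ ∈ Icc (s - r) s, g τ

def windowSupAverage (g : ℝ → ℝ) (r T : ℝ) : ℝ :=
  (1 / T) * ∫ s in r..T, windowSup g r s

end

section WindowSup

variable {g g' : ℝ → ℝ} {M r r₁ r₂ s : ℝ}

theorem windowSup_congr (h : EqOn g g' (Icc (s - r) s)) : windowSup g r s = windowSup g' r s :=
  iSup_congr fun _ => iSup_congr fun hτ => h hτ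

theorem windowSupAverage_eventuallyEq (h : EqOn g g' (Ici 0)) :
    windowSupAverage g r =ᶠ[atTop] windowSupAverage g' r := by
  filter_upwards [eventually_ge_atTop r] with T hT
  unfold windowSupAverage
  congr 1
  refine intervalIntegral.integral_congr fun s hs => windowSup_congr fun τ hτ => h ?_
  rw [uIcc_of_le hT] at hs
  exact le_trans (by linarith [hs.1]) hτ.1

theorem windowSup_nonneg (hg0 : ∀ τ, 0 ≤ g τ) : 0 ≤ windowSup g r s :=
  Real.iSup_nonneg fun τ => Real.iSup_nonneg fun _ => hg0 τ

theorem windowSup_le (hg0 : ∀ τ, 0 ≤ g τ) (hgM : ∀ τ, g τ ≤ M) : windowSup g r s ≤ M :=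
  have hM : 0 ≤ M := (hg0 0).trans (hgM 0)
  Real.iSup_le (fun τ => Real.iSup_le (fun _ => hgM τ) hM) hM

theorem windowSup_eq_sSup_image (hg0 : ∀ τ, 0 ≤ g τ) (hgM : ∀ τ, g τ ≤ M) :
    windowSup g r s = sSup (g '' Icc (s - r) s) := by
  refine (csSup_image ⟨M, ?_⟩ ?_).symm
  · rintro _ ⟨τ, rfl⟩
    exact hgM τ
  · rw [Real.sSup_empty]
    exact Real.iSup_nonneg fun τ => hg0 τ

theorem le_windowSup (hg0 : ∀ τ, 0 ≤ g τ) (hgM : ∀ τ, g τ ≤ M) {τ : ℝ}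
    (hτ : τ ∈ Icc (s - r) s) : g τ ≤ windowSup g r s := by
  rw [windowSup_eq_sSup_image hg0 hgM]
  exact le_csSup ⟨M, by rintro _ ⟨τ, -, rfl⟩; exact hgM τ⟩ (mem_image_of_mem g hτ)

theorem continuous_windowSup (hg : Continuous g) (hg0 : ∀ τ, 0 ≤ g τ) (hgM : ∀ τ, g τ ≤ M) :
    Continuous (windowSup g r) := by
  have hwindow : ∀ s, g '' Icc (s - r) s = (fun t => g (s + t)) '' Icc (-r) 0 := fun s => by
    rw [← image_image g (s + ·), image_const_add_Icc, add_zero, ← sub_eq_add_neg]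
  simp_rw [funext fun s => windowSup_eq_sSup_image (r := r) (s := s) hg0 hgM, hwindow]
  exact isCompact_Icc.continuous_sSup (by fun_prop)

theorem windowSup_le_sum_windowSup (hg0 : ∀ τ, 0 ≤ g τ) (hgM : ∀ τ, g τ ≤ M) (hr₁ : 0 < r₁) :
    windowSup g r₂ s ≤
      ∑ k ∈ Finset.range (⌊r₂ / r₁⌋₊ + 1), windowSup g r₁ (s - k * r₁) := by
  have hsum : 0 ≤ ∑ k ∈ Finset.range (⌊r₂ / r₁⌋₊ + 1), windowSup g r₁ (s - k * r₁) :=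
    Finset.sum_nonneg fun k _ => windowSup_nonneg hg0
  refine Real.iSup_le (fun τ => Real.iSup_le (fun hτ => ?_) hsum) hsum
  set k := ⌊(s - τ) / r₁⌋₊
  have hk : k ∈ Finset.range (⌊r₂ / r₁⌋₊ + 1) :=
    Finset.mem_range_succ_iff.2 <| Nat.floor_le_floor <|
      div_le_div_of_nonneg_right (by linarith [hτ.1]) hr₁.le
  have hk_le : (k : ℝ) * r₁ ≤ s - τ :=
    (le_div_iff₀ hr₁).1 (Nat.floor_le (div_nonneg (by linarith [hτ.2]) hr₁.le))
  have hk_lt : s - τ < (k + 1) * r₁ := (div_lt_iff₀ hr₁).1 (Nat.lt_floor_add_one _)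
  calc g τ ≤ windowSup g r₁ (s - k * r₁) :=
        le_windowSup hg0 hgM ⟨by linarith, by linarith⟩
    _ ≤ _ := Finset.single_le_sum (f := fun k : ℕ => windowSup g r₁ (s - k * r₁))
        (fun _ _ => windowSup_nonneg hg0) hk

theorem integral_windowSup_le (hg : Continuous g) (hg0 : ∀ τ, 0 ≤ g τ) (hgM : ∀ τ, g τ ≤ M)
    (hr₁ : 0 < r₁) (hr₂ : 0 ≤ r₂) {T : ℝ} (hT : r₂ ≤ T) :
    ∫ s in r₂..T, windowSup g r₂ s ≤
      (⌊r₂ / r₁⌋₊ + 1) * (M * r₁ + ∫ s in r₁..T, windowSup g r₁ s) := by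
  set n := ⌊r₂ / r₁⌋₊ + 1
  have hW := continuous_windowSup (r := r₁) hg hg0 hgM
  have hshift : ∀ k ∈ Finset.range n, ∫ s in r₂..T, windowSup g r₁ (s - k * r₁) ≤
      M * r₁ + ∫ s in r₁..T, windowSup g r₁ s := fun k hk => by
    have hkr : (k : ℝ) * r₁ ≤ r₂ := (le_div_iff₀ hr₁).1 <|
      (Nat.cast_le.2 (Finset.mem_range_succ_iff.1 hk)).trans
        (Nat.floor_le (div_nonneg hr₂ hr₁.le))
    rw [intervalIntegral.integral_comp_sub_right (windowSup g r₁)]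
    exact intervalIntegral.integral_le_mul_add_integral hW (fun _ => windowSup_nonneg hg0)
      (fun _ => windowSup_le hg0 hgM) (by linarith) (by linarith) (by nlinarith) hr₁.le
  calc ∫ s in r₂..T, windowSup g r₂ s
      ≤ ∫ s in r₂..T, ∑ k ∈ Finset.range n, windowSup g r₁ (s - k * r₁) :=
        intervalIntegral.integral_mono_on hT
          ((continuous_windowSup hg hg0 hgM).intervalIntegrable _ _)
          (Continuous.intervalIntegrable (by fun_prop) _ _)
          fun _ _ => windowSup_le_sum_windowSup hg0 hgM hr₁
    _ = ∑ k ∈ Finset.range n, ∫ s in r₂..T, windowSup g r₁ (s - k * r₁) :=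
        intervalIntegral.integral_finsetSum fun k _ =>
          Continuous.intervalIntegrable (by fun_prop) _ _
    _ ≤ ∑ _k ∈ Finset.range n, (M * r₁ + ∫ s in r₁..T, windowSup g r₁ s) :=
        Finset.sum_le_sum hshift
    _ = (⌊r₂ / r₁⌋₊ + 1) * (M * r₁ + ∫ s in r₁..T, windowSup g r₁ s) := by
        rw [Finset.sum_const, Finset.card_range, nsmul_eq_mul]
        simp [n]

theorem tendsto_windowSupAverage_of_tendsto (hg : Continuous g) (hg0 : ∀ τ, 0 ≤ g τ)
    (hgM : ∀ τ, g τ ≤ M) (hr₁ : 0 < r₁) (hr₂ : 0 ≤ r₂)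
    (h : Tendsto (windowSupAverage g r₁) atTop (nhds 0)) :
    Tendsto (windowSupAverage g r₂) atTop (nhds 0) := by
  set n : ℝ := ⌊r₂ / r₁⌋₊ + 1
  have hbound : Tendsto (fun T => n * (M * r₁) * T⁻¹ + n * windowSupAverage g r₁ T)
      atTop (nhds 0) := by
    simpa using (tendsto_inv_atTop_zero.const_mul (n * (M * r₁))).add (h.const_mul n)
  refine squeeze_zero' ?_ ?_ hbound
  · filter_upwards [eventually_ge_atTop r₂, eventually_gt_atTop 0] with T hT hT0
    exact mul_nonneg (by positivity)
      (intervalIntegral.integral_nonneg hT fun s _ => windowSup_nonneg hg0)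
  · filter_upwards [eventually_ge_atTop r₂, eventually_gt_atTop 0] with T hT hT0
    calc windowSupAverage g r₂ T
        ≤ (1 / T) * (n * (M * r₁ + ∫ s in r₁..T, windowSup g r₁ s)) :=
          mul_le_mul_of_nonneg_left (integral_windowSup_le hg hg0 hgM hr₁ hr₂ hT) (by positivity)
      _ = n * (M * r₁) * T⁻¹ + n * windowSupAverage g r₁ T := by
          unfold windowSupAverage
          ring

/-- for r₁, r₂ > 0 the classes coincide: `PSAP_{ω,r₁}(X) = PSAP_{ω,r₂}(X)`. -/
theorem psapClass_indep_of_r {X : Type*} [NormedAddCommGroup X]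
    (r₁ r₂ ω : ℝ) (hr₁ : 0 < r₁) (hr₂ : 0 < r₂) (hω : 0 < ω)
    (u : ℝ → X)
    (hcont : ContinuousOn u (Set.Ici 0)) (hbdd : ∃ B, ∀ t ≥ (0:ℝ), ‖u t‖ ≤ B) :
    PSAPclass ω r₁ u ↔ PSAPclass ω r₂ u := by
  obtain ⟨B, hB⟩ := hbdd
  -- Clamping at `0` makes the defect continuous and bounded on all of `ℝ` without changing it
  -- on any window `[s - r, s]` with `r ≤ s`, the only ones the averages see for large `T`.
  set g : ℝ → ℝ := fun τ => ‖u (max τ 0 + ω) - u (max τ 0)‖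
  have hg : Continuous g := by
    have hshift : Continuous fun τ : ℝ => u (max τ 0 + ω) :=
      hcont.comp_continuous (by fun_prop) fun τ => by
        simp only [mem_Ici]; linarith [le_max_right τ 0]
    exact (hshift.sub (hcont.comp_continuous (by fun_prop) fun τ => le_max_right τ 0)).norm
  have hg0 : ∀ τ, 0 ≤ g τ := fun τ => norm_nonneg _
  have hgB : ∀ τ, g τ ≤ B + B := fun τ =>
    (norm_sub_le _ _).trans <|
      add_le_add (hB _ (by linarith [le_max_right τ 0])) (hB _ (le_max_right τ 0))
  have hclass : ∀ r, PSAPclass ω r u ↔ Tendsto (windowSupAverage g r) atTop (nhds 0) := fun r =>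
    tendsto_congr' <| windowSupAverage_eventuallyEq fun τ (hτ : 0 ≤ τ) => by
      simp only [g, max_eq_left hτ]
  rw [hclass, hclass]
  exact ⟨tendsto_windowSupAverage_of_tendsto hg hg0 hgB hr₁ hr₂.le,
    tendsto_windowSupAverage_of_tendsto hg hg0 hgB hr₂ hr₁.le⟩
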